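/- If u is a hermitian functional with u·Q = 0 for a nonzero polynomial Q with Q(0) ≠ 0, then the minimal such polynomial Q (monic up to a unit, dividing every polynomial Q₁ with u·Q₁ = 0) can be chosen to satisfy Q = Q*, where Q*(z) = z^{deg Q}·conj(Q(1/conj z)). -/

import Mathlib

open LaurentPolynomial Complex Polynomial

noncomputable section

abbrev LP := LaurentPolynomial ℂ
abbrev Func := LP →ₗ[ℂ] ℂ

/-- The coefficients of a Laurent polynomial, as a finitely supported function on `ℤ`. -/
def coeF (L : LP) : ℤ →₀ ℂ := L.coeff

/-- The modified functional `u·L`, defined by `(u·L)[f] = u[L·f]`. -/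
def smulF (u : Func) (L : LP) : Func := u ∘ₗ LinearMap.mulLeft ℂ L

/-- The moments `μ_n = u[zⁿ]`. -/
def moment (u : Func) (n : ℤ) : ℂ := u (T n)

/-- A functional is hermitian if `μ_{-n} = conj μ_n`. -/
def IsHermitian (u : Func) : Prop := ∀ n : ℤ, moment u (-n) = (starRingEnd ℂ) (moment u n)

/-- The Carathéodory formal series `F(z) = μ₀ + 2 Σ_{n≥1} μ_{-n} zⁿ`, as coefficients. -/
def CS (u : Func) : ℤ → ℂ := fun n => if n = 0 then moment u 0 else if 0 < n then 2 * moment u (-n) else 0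

/-- The Laurent formal series `L[u](z) = Σ_{n∈ℤ} μ_{-n} zⁿ`, as coefficients. -/
def LS (u : Func) : ℤ → ℂ := fun n => moment u (-n)

/-- `H_*(z) = conj (H (1/conj z))`, coefficient-wise. -/
def starS (H : ℤ → ℂ) : ℤ → ℂ := fun n => (starRingEnd ℂ) (H (-n))

/-- Product of a formal doubly-infinite series with a Laurent polynomial. -/
def mulS (H : ℤ → ℂ) (L : LP) : ℤ → ℂ := fun n => (coeF L).sum fun k c => c * H (n - k)

/-- The `*` operation on Laurent polynomials: `L_*(z) = conj (L (1/conj z))`. -/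
def starLP (L : LP) : LP :=
  AddMonoidAlgebra.ofCoeff (Finsupp.equivMapDomain (Equiv.neg ℤ)
    (Finsupp.mapRange (starRingEnd ℂ) (map_zero _) (coeF L)) : ℤ →₀ ℂ)

/-- A Laurent polynomial as a formal series. -/
def polyS (N : LP) : ℤ → ℂ := fun n => coeF N n

/-- The Lebesgue functional `leb[zⁿ] = δ_{n,0}`. -/
def lebF : Func := (Finsupp.lapply (0 : ℤ) : (ℤ →₀ ℂ) →ₗ[ℂ] ℂ) ∘ₗ
  (AddMonoidAlgebra.coeffLinearEquiv ℂ : LP ≃ₗ[ℂ] (ℤ →₀ ℂ)).toLinearMap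

/-- The Dirac delta at `z = 1`: evaluation at `1`. -/
def delta1 : Func := (Finsupp.lsum ℂ (fun _ : ℤ => (LinearMap.id : ℂ →ₗ[ℂ] ℂ)) : (ℤ →₀ ℂ) →ₗ[ℂ] ℂ) ∘ₗ
  (AddMonoidAlgebra.coeffLinearEquiv ℂ : LP ≃ₗ[ℂ] (ℤ →₀ ℂ)).toLinearMap

/-- `P* (z) = z^q conj(P(1/conj z))` with `q` given: conjugate coefficients and reflect at `q`. -/
def starDeg (q : ℕ) (P : Polynomial ℂ) : Polynomial ℂ := Polynomial.reflect q (P.map (starRingEnd ℂ))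

/-- The class `Δ` of hermitian functionals annihilated by a nonzero Laurent polynomial. -/
def InDelta (u : Func) : Prop := IsHermitian u ∧ ∃ N : LP, N ≠ 0 ∧ smulF u N = 0

/-!
The polynomials annihilating `u` form an ideal of `ℂ[X]`, generated by some `g ≠ 0`. For hermitian
`u` one has `u[L_*] = conj u[L]`, so the annihilator in `ℂ[T;T⁻¹]` is stable under `L ↦ L_*`; since
`g* = z^(deg g) · g_*`, also `g*` annihilates `u`. As `deg g* ≤ deg g`, this forces `g* = c g`, and
applying `*` twice gives `|c| = 1`. For `d² = c` the associate `d g` then satisfies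
`(d g)* = conj d · d² · g = |d|² d g = d g`.
-/

open ComplexConjugate

lemma smulF_apply (u : Func) (N f : LP) : smulF u N f = u (N * f) := rfl

lemma coeff_starLP (L : LP) (n : ℤ) : (starLP L).coeff n = conj (L.coeff (-n)) := rfl

lemma starLP_eq_invert_map (L : LP) :
    starLP L = invert (AddMonoidAlgebra.mapRingHom ℤ (starRingEnd ℂ) L) := by
  ext n
  simp [coeff_starLP]

lemma starLP_mul (M N : LP) : starLP (M * N) = starLP M * starLP N := by
  simp only [starLP_eq_invert_map, map_mul]

lemma starLP_starLP (L : LP) : starLP (starLP L) = L := by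
  ext n
  simp [coeff_starLP]

lemma starLP_C_mul_T (a : ℂ) (n : ℤ) :
    starLP (LaurentPolynomial.C a * T n) = LaurentPolynomial.C (conj a) * T (-n) := by
  rw [← single_eq_C_mul_T, ← single_eq_C_mul_T, starLP_eq_invert_map,
    AddMonoidAlgebra.mapRingHom_single]
  simp only [single_eq_C_mul_T, map_mul, invert_C, invert_T]

lemma starLP_add (M N : LP) : starLP (M + N) = starLP M + starLP N := by
  simp only [starLP_eq_invert_map, map_add]

lemma apply_C_mul_T (u : Func) (a : ℂ) (n : ℤ) :
    u (LaurentPolynomial.C a * T n) = a * moment u n := by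
  rw [← LaurentPolynomial.smul_eq_C_mul, map_smul, smul_eq_mul, moment]

lemma IsHermitian.apply_starLP {u : Func} (hu : IsHermitian u) (f : LP) :
    u (starLP f) = conj (u f) := by
  induction f using LaurentPolynomial.induction_on' with
  | add p q hp hq => rw [starLP_add, map_add, map_add, hp, hq, map_add]
  | C_mul_T n a => rw [starLP_C_mul_T, apply_C_mul_T, apply_C_mul_T, hu n, map_mul]

def annihilator (u : Func) : Ideal LP where
  carrier := {N | smulF u N = 0}
  add_mem' {M N} hM hN := LinearMap.ext fun f => by
    have hMf : u (M * f) = 0 := LinearMap.congr_fun hM f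
    have hNf : u (N * f) = 0 := LinearMap.congr_fun hN f
    simp [smulF_apply, add_mul, hMf, hNf]
  zero_mem' := LinearMap.ext fun f => by simp [smulF_apply]
  smul_mem' M N hN := LinearMap.ext fun f => by
    simpa [smulF_apply, mul_assoc, mul_left_comm M] using LinearMap.congr_fun hN (M * f)

lemma IsHermitian.starLP_mem_annihilator {u : Func} (hu : IsHermitian u) {N : LP}
    (hN : N ∈ annihilator u) : starLP N ∈ annihilator u := LinearMap.ext fun f => by
  have hNf : u (N * starLP f) = 0 := LinearMap.congr_fun hN (starLP f)
  rw [smulF_apply, LinearMap.zero_apply, ← starLP_starLP f, ← starLP_mul, hu.apply_starLP, hNf,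
    map_zero]

def polyAnnihilator (u : Func) : Ideal ℂ[X] := (annihilator u).comap toLaurent

lemma starDeg_natDegree (P : ℂ[X]) :
    starDeg P.natDegree P = (P.map (starRingEnd ℂ)).reverse := by
  rw [starDeg, reverse, natDegree_map]

lemma toLaurent_map_conj (P : ℂ[X]) :
    toLaurent (P.map (starRingEnd ℂ)) =
      AddMonoidAlgebra.mapRingHom ℤ (starRingEnd ℂ) (toLaurent P) := by
  induction P using Polynomial.induction_on' with
  | add p q hp hq => rw [Polynomial.map_add, map_add, hp, hq, map_add, map_add]
  | monomial n a =>
    rw [map_monomial, ← C_mul_X_pow_eq_monomial, ← C_mul_X_pow_eq_monomial,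
      toLaurent_C_mul_X_pow, toLaurent_C_mul_X_pow, ← single_eq_C_mul_T, ← single_eq_C_mul_T,
      AddMonoidAlgebra.mapRingHom_single]

lemma toLaurent_starDeg_natDegree (P : ℂ[X]) :
    toLaurent (starDeg P.natDegree P) = starLP (toLaurent P) * T P.natDegree := by
  rw [starDeg_natDegree, toLaurent_reverse, natDegree_map, toLaurent_map_conj,
    starLP_eq_invert_map]

lemma IsHermitian.starDeg_mem_polyAnnihilator {u : Func} (hu : IsHermitian u) {P : ℂ[X]}
    (hP : P ∈ polyAnnihilator u) : starDeg P.natDegree P ∈ polyAnnihilator u := by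
  rw [polyAnnihilator, Ideal.mem_comap, toLaurent_starDeg_natDegree]
  exact Ideal.mul_mem_right _ _ (hu.starLP_mem_annihilator hP)

lemma starDeg_starDeg (q : ℕ) (P : ℂ[X]) : starDeg q (starDeg q P) = P := by
  ext i
  simp [starDeg, coeff_reflect]

lemma starDeg_C_mul (q : ℕ) (a : ℂ) (P : ℂ[X]) :
    starDeg q (Polynomial.C a * P) = Polynomial.C (conj a) * starDeg q P := by
  rw [starDeg, Polynomial.map_mul, map_C, reflect_C_mul, starDeg]

lemma starDeg_natDegree_ne_zero {P : ℂ[X]} (hP : P ≠ 0) : starDeg P.natDegree P ≠ 0 := by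
  rwa [starDeg_natDegree, Ne, reverse_eq_zero, Polynomial.map_eq_zero]

lemma natDegree_starDeg_natDegree_le (P : ℂ[X]) :
    (starDeg P.natDegree P).natDegree ≤ P.natDegree := by
  rw [starDeg_natDegree, ← natDegree_map (starRingEnd ℂ) (p := P)]
  exact reverse_natDegree_le _

lemma conj_mul_self_eq_one_of_starDeg_eq {P : ℂ[X]} (hP : P ≠ 0) {q : ℕ} {c : ℂ}
    (h : starDeg q P = Polynomial.C c * P) : conj c * c = 1 := by
  have hcP : Polynomial.C (conj c * c) * P = Polynomial.C 1 * P := by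
    conv_rhs => rw [Polynomial.C_1, one_mul, ← starDeg_starDeg q P, h, starDeg_C_mul, h]
    rw [Polynomial.C_mul, mul_assoc]
  exact Polynomial.C_injective (mul_right_cancel₀ hP hcP)

lemma Complex.exists_mul_self_eq_of_conj_mul_self_eq_one {c : ℂ} (hc : conj c * c = 1) :
    ∃ d : ℂ, d * d = c ∧ conj d * d = 1 := by
  obtain ⟨d, rfl⟩ := IsAlgClosed.exists_eq_mul_self c
  refine ⟨d, rfl, ?_⟩
  have hc' : ‖d * d‖ ^ 2 = 1 := by exact_mod_cast (Complex.conj_mul' (d * d)).symm.trans hc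
  have hd : ‖d‖ = 1 := by
    rw [norm_mul, ← sq, ← pow_mul] at hc'
    exact (pow_eq_one_iff_of_nonneg (norm_nonneg d) (by norm_num)).mp hc'
  rw [Complex.conj_mul', hd]
  norm_num

lemma exists_associated_starDeg_eq_self {P : ℂ[X]} (hP : P ≠ 0)
    (h : Associated P (starDeg P.natDegree P)) :
    ∃ Q : ℂ[X], Associated P Q ∧ starDeg Q.natDegree Q = Q := by
  obtain ⟨w, hw⟩ := h
  obtain ⟨c, -, hc⟩ := Polynomial.isUnit_iff.mp w.isUnit
  have hstar : starDeg P.natDegree P = Polynomial.C c * P := by rw [← hw, ← hc, mul_comm]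
  obtain ⟨d, rfl, hd⟩ := Complex.exists_mul_self_eq_of_conj_mul_self_eq_one
    (conj_mul_self_eq_one_of_starDeg_eq hP hstar)
  have hd0 : d ≠ 0 := by rintro rfl; simp at hd
  refine ⟨Polynomial.C d * P,
    (associated_unit_mul_left P _ (isUnit_C.mpr hd0.isUnit)).symm, ?_⟩
  rw [natDegree_C_mul hd0, starDeg_C_mul, hstar, ← mul_assoc, ← Polynomial.C_mul, ← mul_assoc, hd,
    one_mul]

theorem stmt4_general (u : Func) (hu : IsHermitian u)
    (Q₀ : Polynomial ℂ) (hQ₀ : Q₀ ≠ 0)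
    (hann : smulF u (Polynomial.toLaurent Q₀) = 0) :
    ∃ Q : Polynomial ℂ, Q ≠ 0 ∧ smulF u (Polynomial.toLaurent Q) = 0 ∧
      (∀ Q₁ : Polynomial ℂ, smulF u (Polynomial.toLaurent Q₁) = 0 → Q ∣ Q₁) ∧
      starDeg Q.natDegree Q = Q := by
  obtain ⟨g, hg⟩ := (IsPrincipalIdealRing.principal (polyAnnihilator u)).principal
  have hmem (P : ℂ[X]) : P ∈ polyAnnihilator u ↔ g ∣ P := by
    rw [hg]
    exact Ideal.mem_span_singleton
  have hg0 : g ≠ 0 := by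
    rintro rfl
    exact hQ₀ (zero_dvd_iff.mp ((hmem Q₀).mp hann))
  have hstar : Associated g (starDeg g.natDegree g) :=
    associated_of_dvd_of_natDegree_le
      ((hmem _).mp (hu.starDeg_mem_polyAnnihilator ((hmem g).mpr dvd_rfl)))
      (starDeg_natDegree_ne_zero hg0) (natDegree_starDeg_natDegree_le g)
  obtain ⟨Q, hgQ, hQ⟩ := exists_associated_starDeg_eq_self hg0 hstar
  exact ⟨Q, hgQ.ne_zero_iff.mp hg0, (hmem Q).mpr hgQ.dvd,
    fun Q₁ h₁ => hgQ.symm.dvd.trans ((hmem Q₁).mp h₁), hQ⟩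

/-- if a hermitian `u` is annihilated by a nonzero polynomial with
nonzero constant term, then a minimal annihilating polynomial can be chosen
self-reciprocal: `Q = Q*` where `Q*(z) = z^(deg Q)·conj(Q(1/conj z))`. -/
theorem stmt4 (u : Func) (hu : IsHermitian u)
    (Q₀ : Polynomial ℂ) (hQ₀ : Q₀ ≠ 0) (h0 : Q₀.coeff 0 ≠ 0)
    (hann : smulF u (Polynomial.toLaurent Q₀) = 0) :
    ∃ Q : Polynomial ℂ, Q ≠ 0 ∧ smulF u (Polynomial.toLaurent Q) = 0 ∧
      (∀ Q₁ : Polynomial ℂ, smulF u (Polynomial.toLaurent Q₁) = 0 → Q ∣ Q₁) ∧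
      starDeg Q.natDegree Q = Q :=
  stmt4_general u hu Q₀ hQ₀ hann
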